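/- arXiv:2012.01182 — 7 statements merged into one kernel-verified Lean document; each statement's English description precedes it below -/
import Mathlib

section
/- Let N ≥ 2, let W be a Hermitian positive definite N×N complex matrix partitioned in block form W = [[W₁₁, W₁₂],[W₂₁, W₂₂]] with W₁₁ of size (N−1)×(N−1), let x ∈ ℂᴺ be partitioned as x = (x₁, x₂) with x₁ ∈ ℂᴺ⁻¹, x₂ ∈ ℂ, and let e_N denote the last standard basis vector of ℂᴺ. Define s₁ := xᴴ W⁻¹ x and s₂ := |xᴴ W⁻¹ e_N|² / (e_Nᴴ W⁻¹ e_N). Then s₁ − s₂ = x₁ᴴ W₁₁⁻¹ x₁; in particular s₁ − s₂ is a nonnegative real number. -/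
open Matrix
open scoped ComplexOrder

/-!
Write `W⁻¹ = [[P, Q], [Qᴴ, t]]`. Completing the square in the last coordinate gives
`xᴴ W⁻¹ x = x₁ᴴ (P - Q t⁻¹ Qᴴ) x₁ + t |v|²` with `v = t⁻¹ Qᴴ x₁ + x₂`, while `e_Nᴴ W⁻¹ e_N = t`
and `xᴴ W⁻¹ e_N = conj (t v)`, so `s₂ = t |v|²` and `s₁ - s₂ = x₁ᴴ (P - Q t⁻¹ Qᴴ) x₁`. Applying the
block inversion formula to `W⁻¹` shows that its Schur complement `P - Q t⁻¹ Qᴴ` is `W₁₁⁻¹`, which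
is positive definite as the inverse of a principal block of `W`.
-/

namespace Matrix

variable {m n : Type*} [Fintype m] [Fintype n]

theorem schur_complement₂₂_of_inv_eq_inv₁₁ {α : Type*} [CommRing α] [DecidableEq m]
    [DecidableEq n] {A : Matrix m m α} {B : Matrix m n α} {C : Matrix n m α} {D : Matrix n n α}
    {P : Matrix m m α} {Q : Matrix m n α} {R : Matrix n m α} {T : Matrix n n α}
    (hW : IsUnit (fromBlocks A B C D)) (hinv : (fromBlocks A B C D)⁻¹ = fromBlocks P Q R T)
    (hT : IsUnit T) :
    P - Q * T⁻¹ * R = A⁻¹ := by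
  have hW' : fromBlocks A B C D = (fromBlocks P Q R T)⁻¹ := by
    rw [← hinv, nonsing_inv_nonsing_inv _ ((isUnit_iff_isUnit_det _).mp hW)]
  let := (hinv ▸ isUnit_nonsing_inv_iff.mpr hW : IsUnit (fromBlocks P Q R T)).invertible
  let := hT.invertible
  let := invertibleOfFromBlocks₂₂Invertible P Q R T
  have hA : A = ⅟(P - Q * ⅟T * R) := by
    rw [← toBlocks_fromBlocks₁₁ A B C D, hW', ← invOf_eq_nonsing_inv, invOf_fromBlocks₂₂_eq,
      toBlocks_fromBlocks₁₁]
  rw [hA, ← invOf_eq_nonsing_inv T, ← invOf_eq_nonsing_inv, invOf_invOf]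

variable {𝕜 : Type*} [RCLike 𝕜]

theorem dotProduct_fromBlocks_mulVec_sumElim_zero_one {P : Matrix m m 𝕜}
    {Q : Matrix m (Fin 1) 𝕜} {T : Matrix (Fin 1) (Fin 1) 𝕜} (hT : T.IsHermitian)
    (x₁ : m → 𝕜) (x₂ : Fin 1 → 𝕜) :
    star (Sum.elim x₁ x₂) ⬝ᵥ (fromBlocks P Q Qᴴ T *ᵥ Sum.elim 0 1) =
      star ((Qᴴ *ᵥ x₁ + T *ᵥ x₂) 0) := by
  have ht : (starRingEnd 𝕜) (T 0 0) = T 0 0 := hT.apply 0 0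
  simp [dotProduct, mulVec, conjTranspose_apply, ht, mul_comm]

theorem dotProduct_sub_norm_sq_div_eq_schur_complement {P : Matrix m m 𝕜}
    {Q : Matrix m (Fin 1) 𝕜} {T : Matrix (Fin 1) (Fin 1) 𝕜} (hT : T.IsHermitian)
    (ht : T 0 0 ≠ 0) (x₁ : m → 𝕜) (x₂ : Fin 1 → 𝕜) :
    star (Sum.elim x₁ x₂) ⬝ᵥ (fromBlocks P Q Qᴴ T *ᵥ Sum.elim x₁ x₂) -
        ((‖star (Sum.elim x₁ x₂) ⬝ᵥ (fromBlocks P Q Qᴴ T *ᵥ Sum.elim 0 1)‖ ^ 2 : ℝ) : 𝕜) /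
          (star (Sum.elim (0 : m → 𝕜) 1) ⬝ᵥ (fromBlocks P Q Qᴴ T *ᵥ Sum.elim 0 1)) =
      star x₁ ⬝ᵥ ((P - Q * T⁻¹ * Qᴴ) *ᵥ x₁) := by
  have hdet : IsUnit T.det := by rw [det_fin_one]; exact ht.isUnit
  let := invertibleOfIsUnitDet T hdet
  set v := (T⁻¹ * Qᴴ) *ᵥ x₁ + x₂
  have hTv : Qᴴ *ᵥ x₁ + T *ᵥ x₂ = T *ᵥ v := by
    rw [mulVec_add, mulVec_mulVec, mul_nonsing_inv_cancel_left _ _ hdet]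
  have hTv₀ : (T *ᵥ v) 0 = T 0 0 * v 0 := by simp [mulVec, dotProduct]
  have hvTv : star v ⬝ᵥ (T *ᵥ v) = T 0 0 * ((starRingEnd 𝕜) (v 0) * v 0) := by
    simp only [dotProduct, Finset.univ_unique, Fin.default_eq_zero, Finset.sum_singleton,
      Pi.star_apply, RCLike.star_def, hTv₀]
    ring
  have he : star (Sum.elim (0 : m → 𝕜) 1) ⬝ᵥ (fromBlocks P Q Qᴴ T *ᵥ Sum.elim 0 1) = T 0 0 := by
    simp [dotProduct, mulVec]
  rw [dotProduct_mulVec, schur_complement_eq₂₂ P Q x₁ x₂ hT, ← dotProduct_mulVec,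
    ← dotProduct_mulVec, dotProduct_fromBlocks_mulVec_sumElim_zero_one hT, hTv, hTv₀, he,
    RCLike.ofReal_pow, ← RCLike.mul_conj, hvTv]
  have ht' : (starRingEnd 𝕜) (T 0 0) = T 0 0 := hT.apply 0 0
  simp only [RCLike.star_def, map_mul, RCLike.conj_conj, ht']
  field_simp
  ring

end Matrix

theorem stmt_3_general {n : ℕ}
    (W₁₁ : Matrix (Fin n) (Fin n) ℂ) (W₁₂ : Matrix (Fin n) (Fin 1) ℂ)
    (W₂₁ : Matrix (Fin 1) (Fin n) ℂ) (W₂₂ : Matrix (Fin 1) (Fin 1) ℂ)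
    (hW : (fromBlocks W₁₁ W₁₂ W₂₁ W₂₂).PosDef)
    (x₁ : Fin n → ℂ) (x₂ : ℂ)
    (s₁ s₂ : ℂ)
    (hs₁ : s₁ = star (Sum.elim x₁ fun _ => x₂) ⬝ᵥ
        ((fromBlocks W₁₁ W₁₂ W₂₁ W₂₂)⁻¹ *ᵥ Sum.elim x₁ fun _ => x₂))
    (hs₂ : s₂ = ((‖star (Sum.elim x₁ fun _ => x₂) ⬝ᵥ
          ((fromBlocks W₁₁ W₁₂ W₂₁ W₂₂)⁻¹ *ᵥ
            Sum.elim (0 : Fin n → ℂ) (1 : Fin 1 → ℂ))‖ ^ 2 : ℝ) : ℂ) /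
        (star (Sum.elim (0 : Fin n → ℂ) (1 : Fin 1 → ℂ)) ⬝ᵥ
          ((fromBlocks W₁₁ W₁₂ W₂₁ W₂₂)⁻¹ *ᵥ
            Sum.elim (0 : Fin n → ℂ) (1 : Fin 1 → ℂ)))) :
    s₁ - s₂ = star x₁ ⬝ᵥ (W₁₁⁻¹ *ᵥ x₁) ∧ ∃ r : ℝ, 0 ≤ r ∧ s₁ - s₂ = (r : ℂ) := by
  set M := (fromBlocks W₁₁ W₁₂ W₂₁ W₂₂)⁻¹
  have hM : M.PosDef := hW.inv
  have hblocks : M = fromBlocks M.toBlocks₁₁ M.toBlocks₁₂ M.toBlocks₂₁ M.toBlocks₂₂ :=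
    (fromBlocks_toBlocks M).symm
  obtain ⟨-, hQR, -, hT⟩ := isHermitian_fromBlocks_iff.mp (hblocks ▸ hM.isHermitian)
  have ht : M.toBlocks₂₂ 0 0 ≠ 0 := (hM.diag_pos (i := Sum.inr 0)).ne'
  have hschur := schur_complement₂₂_of_inv_eq_inv₁₁ hW.isUnit hblocks
    ((isUnit_iff_isUnit_det _).mpr (by rw [det_fin_one]; exact ht.isUnit))
  have key : s₁ - s₂ = star x₁ ⬝ᵥ (W₁₁⁻¹ *ᵥ x₁) := by
    rw [hs₁, hs₂, hblocks, ← hQR, ← hschur, ← hQR]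
    exact dotProduct_sub_norm_sq_div_eq_schur_complement hT ht x₁ _
  have h₁₁ : W₁₁.PosDef := hW.submatrix Sum.inl_injective
  obtain ⟨r, hr, hra⟩ :=
    RCLike.nonneg_iff_exists_ofReal.mp (h₁₁.inv.posSemidef.dotProduct_mulVec_nonneg x₁)
  exact ⟨key, r, hr, key.trans hra.symm⟩

/-- s₁ − s₂ = x₁ᴴ W₁₁⁻¹ x₁, a nonnegative real number. -/
theorem stmt_3 {n : ℕ} (hn : 1 ≤ n)
    (W₁₁ : Matrix (Fin n) (Fin n) ℂ) (W₁₂ : Matrix (Fin n) (Fin 1) ℂ)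
    (W₂₁ : Matrix (Fin 1) (Fin n) ℂ) (W₂₂ : Matrix (Fin 1) (Fin 1) ℂ)
    (hW : (fromBlocks W₁₁ W₁₂ W₂₁ W₂₂).PosDef)
    (x₁ : Fin n → ℂ) (x₂ : ℂ)
    (s₁ s₂ : ℂ)
    (hs₁ : s₁ = star (Sum.elim x₁ fun _ => x₂) ⬝ᵥ
        ((fromBlocks W₁₁ W₁₂ W₂₁ W₂₂)⁻¹ *ᵥ Sum.elim x₁ fun _ => x₂))
    (hs₂ : s₂ = ((‖star (Sum.elim x₁ fun _ => x₂) ⬝ᵥ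
          ((fromBlocks W₁₁ W₁₂ W₂₁ W₂₂)⁻¹ *ᵥ
            Sum.elim (0 : Fin n → ℂ) (1 : Fin 1 → ℂ))‖ ^ 2 : ℝ) : ℂ) /
        (star (Sum.elim (0 : Fin n → ℂ) (1 : Fin 1 → ℂ)) ⬝ᵥ
          ((fromBlocks W₁₁ W₁₂ W₂₁ W₂₂)⁻¹ *ᵥ
            Sum.elim (0 : Fin n → ℂ) (1 : Fin 1 → ℂ)))) :
    s₁ - s₂ = star x₁ ⬝ᵥ (W₁₁⁻¹ *ᵥ x₁) ∧ ∃ r : ℝ, 0 ≤ r ∧ s₁ - s₂ = (r : ℂ) :=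
  stmt_3_general W₁₁ W₁₂ W₂₁ W₂₂ hW x₁ x₂ s₁ s₂ hs₁ hs₂
end

section
/- Let N ≥ 2, let v ∈ ℂᴺ with ‖v‖ = 1, and let V⊥ be an N×(N−1) complex matrix with V⊥ᴴV⊥ = I_{N−1} and V⊥ᴴv = 0. Let Σ_t be a Hermitian positive definite N×N complex matrix, let G_t be an invertible N×N matrix with Σ_t = G_t G_tᴴ, and let F_t be an invertible (N−1)×(N−1) matrix with F_t F_tᴴ = V⊥ᴴ Σ_t V⊥. Let γ_t := vᴴ Σ_t⁻¹ v (a positive real number) and define the N×N matrix Q whose first N−1 columns are G_tᴴ V⊥ F_t⁻ᴴ and whose last column is γ_t^{−1/2} G_t⁻¹ v. Then Q is unitary and Qᴴ G_t⁻¹ v = γ_t^{1/2} e_N, where e_N is the last standard basis vector of ℂᴺ. -/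
open Matrix
open scoped ComplexOrder

/-! With `A := Gᴴ V F⁻ᴴ` and `w := G⁻¹ v`, the identity `F Fᴴ = Vᴴ (G Gᴴ) V` gives
`Aᴴ A = F⁻¹ (F Fᴴ) F⁻ᴴ = 1`, while `Aᴴ w = F⁻¹ Vᴴ v = 0` and `wᴴ w = vᴴ (G Gᴴ)⁻¹ v = γ`.
So the columns of `A` together with `γ^{-1/2} w` are orthonormal, and `Qᴴ w` has the
coordinates `Aᴴ w = 0` and `γ^{-1/2} wᴴ w = γ^{1/2}`. -/

namespace Matrix

section BorderedColumn

variable {m n α : Type*} [Fintype m] [Semiring α] [StarRing α]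

theorem conjTranspose_fromCols_replicateCol_mul_self [Fintype n] [DecidableEq n]
    (A : Matrix m n α) (b : m → α)
    (hA : Aᴴ * A = 1) (hAb : Aᴴ *ᵥ b = 0) (hb : star b ⬝ᵥ b = 1) :
    (fromCols A (replicateCol (Fin 1) b))ᴴ * fromCols A (replicateCol (Fin 1) b) = 1 := by
  have hAb' : Aᴴ * replicateCol (Fin 1) b = 0 := by
    rw [← replicateCol_mulVec, hAb]
    rfl
  have hbA : (replicateCol (Fin 1) b)ᴴ * A = 0 := by
    simpa only [conjTranspose_mul, conjTranspose_conjTranspose, conjTranspose_zero]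
      using congrArg conjTranspose hAb'
  have hbb : (replicateCol (Fin 1) b)ᴴ * replicateCol (Fin 1) b = 1 := by
    ext i j
    rw [conjTranspose_replicateCol, replicateRow_mul_replicateCol_apply, hb, Subsingleton.elim i j,
      one_apply_eq]
  rw [conjTranspose_fromCols_eq_fromRows_conjTranspose, fromRows_mul_fromCols, hA, hAb', hbA, hbb,
    fromBlocks_one]

theorem conjTranspose_fromCols_replicateCol_mulVec (A : Matrix m n α) (b x : m → α) :
    (fromCols A (replicateCol (Fin 1) b))ᴴ *ᵥ x = Sum.elim (Aᴴ *ᵥ x) fun _ => star b ⬝ᵥ x := by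
  rw [conjTranspose_fromCols_eq_fromRows_conjTranspose, fromRows_mulVec, conjTranspose_replicateCol,
    replicateRow_mulVec_eq_const]
  rfl

end BorderedColumn

section Whitening

variable {m n α : Type*} [Fintype m] [Fintype n] [DecidableEq n] [CommRing α] [StarRing α]

theorem conjTranspose_mul_self_eq_one_of_mul_conjTranspose_eq (G : Matrix m m α)
    (V : Matrix m n α) {F : Matrix n n α} (hF : IsUnit F.det)
    (hFF : F * Fᴴ = Vᴴ * (G * Gᴴ) * V) :
    (Gᴴ * V * F⁻¹ᴴ)ᴴ * (Gᴴ * V * F⁻¹ᴴ) = 1 := by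
  have hFH : IsUnit Fᴴ.det := by
    rw [det_conjTranspose]
    exact hF.star
  calc (Gᴴ * V * F⁻¹ᴴ)ᴴ * (Gᴴ * V * F⁻¹ᴴ) = F⁻¹ * (Vᴴ * (G * Gᴴ) * V) * Fᴴ⁻¹ := by
        simp only [conjTranspose_mul, conjTranspose_conjTranspose, conjTranspose_nonsing_inv,
          Matrix.mul_assoc]
    _ = (F⁻¹ * F) * (Fᴴ * Fᴴ⁻¹) := by rw [← hFF]; simp only [Matrix.mul_assoc]
    _ = 1 := by rw [nonsing_inv_mul _ hF, mul_nonsing_inv _ hFH, Matrix.one_mul]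

theorem conjTranspose_mulVec_inv_mulVec_eq_zero [DecidableEq m] {G : Matrix m m α}
    (hG : IsUnit G.det) {V : Matrix m n α} (F : Matrix n n α) {v : m → α} (hVv : Vᴴ *ᵥ v = 0) :
    (Gᴴ * V * F⁻¹ᴴ)ᴴ *ᵥ (G⁻¹ *ᵥ v) = 0 := by
  have hAH : (Gᴴ * V * F⁻¹ᴴ)ᴴ * G⁻¹ = F⁻¹ * Vᴴ := by
    simp only [conjTranspose_mul, conjTranspose_conjTranspose, Matrix.mul_assoc,
      mul_nonsing_inv _ hG, Matrix.mul_one]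
  rw [mulVec_mulVec, hAH, ← mulVec_mulVec, hVv, mulVec_zero]

theorem star_inv_mulVec_dotProduct_inv_mulVec [DecidableEq m] (G : Matrix m m α) (v : m → α) :
    star (G⁻¹ *ᵥ v) ⬝ᵥ (G⁻¹ *ᵥ v) = star v ⬝ᵥ ((G * Gᴴ)⁻¹ *ᵥ v) := by
  rw [star_mulVec, dotProduct_mulVec, dotProduct_mulVec, vecMul_vecMul, Matrix.mul_inv_rev,
    conjTranspose_nonsing_inv]

end Whitening

end Matrix

section Normalization

variable {ι : Type*} [Fintype ι]

theorem star_ofReal_inv_smul_dotProduct (r : ℝ) (w x : ι → ℂ) :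
    star ((r : ℂ)⁻¹ • w) ⬝ᵥ x = (r : ℂ)⁻¹ * (star w ⬝ᵥ x) := by
  simp only [star_smul, star_inv₀, Complex.star_def, Complex.conj_ofReal, smul_dotProduct,
    smul_eq_mul]

variable {w : ι → ℂ} {γ : ℝ}

theorem star_inv_sqrt_smul_dotProduct (hγ : 0 < γ) (hw : star w ⬝ᵥ w = γ) :
    star (((√γ : ℝ) : ℂ)⁻¹ • w) ⬝ᵥ w = √γ := by
  have hs : (√γ : ℂ) ≠ 0 := by exact_mod_cast (Real.sqrt_pos.2 hγ).ne'
  have hγs : (γ : ℂ) = √γ * √γ := by rw [← Complex.ofReal_mul, Real.mul_self_sqrt hγ.le]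
  rw [star_ofReal_inv_smul_dotProduct, hw, hγs, inv_mul_cancel_left₀ hs]

theorem star_inv_sqrt_smul_dotProduct_self (hγ : 0 < γ) (hw : star w ⬝ᵥ w = γ) :
    star (((√γ : ℝ) : ℂ)⁻¹ • w) ⬝ᵥ (((√γ : ℝ) : ℂ)⁻¹ • w) = 1 := by
  have hs : (√γ : ℂ) ≠ 0 := by exact_mod_cast (Real.sqrt_pos.2 hγ).ne'
  rw [dotProduct_smul, star_inv_sqrt_smul_dotProduct hγ hw, smul_eq_mul, inv_mul_cancel₀ hs]

end Normalization

theorem stmt_5_general {n : ℕ}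
    (v : (Fin n ⊕ Fin 1) → ℂ)
    (Vperp : Matrix (Fin n ⊕ Fin 1) (Fin n) ℂ)
    (hVperpv : Vperpᴴ *ᵥ v = 0)
    (Sigt : Matrix (Fin n ⊕ Fin 1) (Fin n ⊕ Fin 1) ℂ)
    (Gt : Matrix (Fin n ⊕ Fin 1) (Fin n ⊕ Fin 1) ℂ) (hGt : IsUnit Gt.det)
    (hGtSigt : Sigt = Gt * Gtᴴ)
    (Ft : Matrix (Fin n) (Fin n) ℂ) (hFt : IsUnit Ft.det)
    (hFtFt : Ft * Ftᴴ = Vperpᴴ * Sigt * Vperp)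
    (γt : ℝ) (hγtpos : 0 < γt)
    (hγt : (γt : ℂ) = star v ⬝ᵥ (Sigt⁻¹ *ᵥ v))
    (Q : Matrix (Fin n ⊕ Fin 1) (Fin n ⊕ Fin 1) ℂ)
    (hQ : Q = fromCols (Gtᴴ * Vperp * (Ft⁻¹)ᴴ)
        (replicateCol (Fin 1) (((Real.sqrt γt : ℝ) : ℂ)⁻¹ • (Gt⁻¹ *ᵥ v)))) :
    Qᴴ * Q = 1 ∧
    Qᴴ *ᵥ (Gt⁻¹ *ᵥ v) =
      ((Real.sqrt γt : ℝ) : ℂ) • Sum.elim (0 : Fin n → ℂ) (1 : Fin 1 → ℂ) := by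
  subst hQ hGtSigt
  have hAw := conjTranspose_mulVec_inv_mulVec_eq_zero hGt Ft hVperpv
  have hww : star (Gt⁻¹ *ᵥ v) ⬝ᵥ (Gt⁻¹ *ᵥ v) = γt := by
    rw [star_inv_mulVec_dotProduct_inv_mulVec, hγt]
  refine ⟨conjTranspose_fromCols_replicateCol_mul_self _ _
    (conjTranspose_mul_self_eq_one_of_mul_conjTranspose_eq Gt Vperp hFt hFtFt)
    (by rw [mulVec_smul, hAw, smul_zero]) (star_inv_sqrt_smul_dotProduct_self hγtpos hww), ?_⟩
  rw [conjTranspose_fromCols_replicateCol_mulVec, hAw, star_inv_sqrt_smul_dotProduct hγtpos hww]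
  ext (i | i) <;> simp

/-- the rotation matrix Q is unitary and maps the whitened signature
G_t⁻¹v to γ_t^{1/2} e_N. -/
theorem stmt_5 {n : ℕ} (hn : 1 ≤ n)
    (v : (Fin n ⊕ Fin 1) → ℂ) (hv : star v ⬝ᵥ v = 1)
    (Vperp : Matrix (Fin n ⊕ Fin 1) (Fin n) ℂ)
    (hVperp : Vperpᴴ * Vperp = 1) (hVperpv : Vperpᴴ *ᵥ v = 0)
    (Sigt : Matrix (Fin n ⊕ Fin 1) (Fin n ⊕ Fin 1) ℂ) (hSigt : Sigt.PosDef)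
    (Gt : Matrix (Fin n ⊕ Fin 1) (Fin n ⊕ Fin 1) ℂ) (hGt : IsUnit Gt.det)
    (hGtSigt : Sigt = Gt * Gtᴴ)
    (Ft : Matrix (Fin n) (Fin n) ℂ) (hFt : IsUnit Ft.det)
    (hFtFt : Ft * Ftᴴ = Vperpᴴ * Sigt * Vperp)
    (γt : ℝ) (hγtpos : 0 < γt)
    (hγt : (γt : ℂ) = star v ⬝ᵥ (Sigt⁻¹ *ᵥ v))
    (Q : Matrix (Fin n ⊕ Fin 1) (Fin n ⊕ Fin 1) ℂ)
    (hQ : Q = fromCols (Gtᴴ * Vperp * (Ft⁻¹)ᴴ)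
        (replicateCol (Fin 1) (((Real.sqrt γt : ℝ) : ℂ)⁻¹ • (Gt⁻¹ *ᵥ v)))) :
    Qᴴ * Q = 1 ∧
    Qᴴ *ᵥ (Gt⁻¹ *ᵥ v) =
      ((Real.sqrt γt : ℝ) : ℂ) • Sum.elim (0 : Fin n → ℂ) (1 : Fin 1 → ℂ) :=
  stmt_5_general v Vperp hVperpv Sigt Gt hGt hGtSigt Ft hFt hFtFt γt hγtpos hγt Q hQ
end

section
/- Let N ≥ 2, let v ∈ ℂᴺ with ‖v‖ = 1, let V⊥ be an N×(N−1) complex matrix with V⊥ᴴV⊥ = I_{N−1} and V⊥ᴴv = 0, let Σ and Σ_t be Hermitian positive definite N×N complex matrices, let G_t be invertible with Σ_t = G_t G_tᴴ, let F_t be invertible with F_t F_tᴴ = V⊥ᴴ Σ_t V⊥, and let Q be the unitary matrix whose first N−1 columns are G_tᴴ V⊥ F_t⁻ᴴ and whose last column is (vᴴΣ_t⁻¹v)^{−1/2} G_t⁻¹ v. Define Ω := Qᴴ G_t⁻¹ Σ G_t⁻ᴴ Q and let Ω₂₁ denote its bottom-left 1×(N−1) block (last row, first N−1 columns). Then Ω₂₁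 = 0 if and only if vᴴ Σ_t⁻¹ Σ V⊥ = 0 (the zero 1×(N−1) row). -/
open Matrix
open scoped ComplexOrder

/-!
Write `w = Gₜ⁻¹ v / √(vᴴ Σₜ⁻¹ v)` for the last column of `Q` and `A = Gₜᴴ V⊥ Fₜ⁻ᴴ` for the others.
Then `Ω₂₁ = wᴴ (Gₜ⁻¹ Σ Gₜ⁻ᴴ) A`, and since `Gₜ⁻ᴴ Gₜ⁻¹ = Σₜ⁻¹` this collapses to
`(vᴴ Σₜ⁻¹ Σ V⊥) Fₜ⁻ᴴ / √(vᴴ Σₜ⁻¹ v)`. The factor `Fₜ⁻ᴴ` is invertible, and the normalizing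
scalar is nonzero unless `v = 0`, in which case both sides vanish anyway.
-/

namespace Matrix

variable {m k : Type*} [Fintype m]

theorem toBlocks₂₁_conjTranspose_fromCols_mul_fromCols {α ι : Type*} [Semiring α] [StarRing α]
    [Fintype ι] (A : Matrix m ι α) (w : m → α) (M : Matrix m m α) :
    ((fromCols A (replicateCol (Fin 1) w))ᴴ * M * fromCols A (replicateCol (Fin 1) w)).toBlocks₂₁
      = replicateRow (Fin 1) (star w ᵥ* (M * A)) := by
  rw [conjTranspose_fromCols_eq_fromRows_conjTranspose, fromRows_mul, fromRows_mul_fromCols,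
    toBlocks_fromBlocks₂₁, conjTranspose_replicateCol, ← replicateRow_vecMul,
    ← replicateRow_vecMul, vecMul_vecMul]

theorem vecMul_eq_zero_iff_of_isUnit [DecidableEq m] {R : Type*} [CommRing R] {B : Matrix m m R}
    (hB : IsUnit B) {x : m → R} : x ᵥ* B = 0 ↔ x = 0 :=
  (vecMul_injective_of_isUnit hB).eq_iff' (zero_vecMul B)

theorem star_inv_mulVec_vecMul_conjTranspose_mul [DecidableEq m] {K : Type*} [Field K]
    [StarRing K] {G : Matrix m m K} (hG : IsUnit G.det) (v : m → K) (S : Matrix m m K)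
    (X : Matrix m k K) :
    star (G⁻¹ *ᵥ v) ᵥ* (G⁻¹ * S * (G⁻¹)ᴴ * (Gᴴ * X)) = star v ᵥ* ((G * Gᴴ)⁻¹ * S * X) := by
  have hGH : IsUnit Gᴴ.det := by rwa [det_conjTranspose, isUnit_star]
  rw [star_mulVec, vecMul_vecMul, mul_inv_rev, conjTranspose_nonsing_inv]
  simp only [Matrix.mul_assoc, nonsing_inv_mul_cancel_left _ _ hGH]

theorem inv_sqrt_smul_vecMul_eq_zero_iff {P : Matrix m m ℂ} (hP : P.PosDef) (v : m → ℂ)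
    (X : Matrix m k ℂ) :
    ((Real.sqrt (star v ⬝ᵥ (P *ᵥ v)).re : ℝ) : ℂ)⁻¹ • (star v ᵥ* X) = 0 ↔ star v ᵥ* X = 0 := by
  rcases eq_or_ne v 0 with rfl | hv
  · simp
  · rw [smul_eq_zero, or_iff_right]
    simpa using Real.sqrt_ne_zero'.mpr (hP.re_dotProduct_pos hv)

end Matrix

theorem stmt_6_general {n : ℕ}
    (v : (Fin n ⊕ Fin 1) → ℂ)
    (Vperp : Matrix (Fin n ⊕ Fin 1) (Fin n) ℂ)
    (Sig Sigt : Matrix (Fin n ⊕ Fin 1) (Fin n ⊕ Fin 1) ℂ)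
    (Gt : Matrix (Fin n ⊕ Fin 1) (Fin n ⊕ Fin 1) ℂ) (hGt : IsUnit Gt.det)
    (hGtSigt : Sigt = Gt * Gtᴴ)
    (Ft : Matrix (Fin n) (Fin n) ℂ) (hFt : IsUnit Ft.det)
    (Q : Matrix (Fin n ⊕ Fin 1) (Fin n ⊕ Fin 1) ℂ)
    (hQ : Q = fromCols (Gtᴴ * Vperp * (Ft⁻¹)ᴴ)
        (replicateCol (Fin 1) (((Real.sqrt ((star v ⬝ᵥ (Sigt⁻¹ *ᵥ v)).re) : ℝ) : ℂ)⁻¹ •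
          (Gt⁻¹ *ᵥ v))))
    (Ω : Matrix (Fin n ⊕ Fin 1) (Fin n ⊕ Fin 1) ℂ)
    (hΩ : Ω = Qᴴ * (Gt⁻¹ * Sig * (Gt⁻¹)ᴴ) * Q) :
    Ω.toBlocks₂₁ = 0 ↔ star v ᵥ* (Sigt⁻¹ * Sig * Vperp) = 0 := by
  subst hQ hΩ
  have hSigtInv : Sigt⁻¹.PosDef := by
    rw [hGtSigt]
    exact (PosDef.mul_conjTranspose_self Gt
      (vecMul_injective_of_isUnit ((isUnit_iff_isUnit_det _).2 hGt))).inv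
  have hFtInvH : IsUnit (Ft⁻¹)ᴴ := by
    rw [isUnit_iff_isUnit_det, det_conjTranspose, isUnit_star]
    exact isUnit_nonsing_inv_det _ hFt
  rw [toBlocks₂₁_conjTranspose_fromCols_mul_fromCols, replicateRow_eq_zero, star_smul,
    smul_vecMul, Matrix.mul_assoc Gtᴴ, star_inv_mulVec_vecMul_conjTranspose_mul hGt, ← hGtSigt,
    star_inv₀, Complex.star_def, Complex.conj_ofReal]
  rw [inv_sqrt_smul_vecMul_eq_zero_iff hSigtInv, ← Matrix.mul_assoc, ← vecMul_vecMul,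
    vecMul_eq_zero_iff_of_isUnit hFtInvH]

/-- the bottom-left block Ω₂₁ of Ω = Qᴴ G_t⁻¹ Σ G_t⁻ᴴ Q vanishes
iff vᴴΣ_t⁻¹ΣV⊥ = 0. -/
theorem stmt_6 {n : ℕ} (hn : 1 ≤ n)
    (v : (Fin n ⊕ Fin 1) → ℂ) (hv : star v ⬝ᵥ v = 1)
    (Vperp : Matrix (Fin n ⊕ Fin 1) (Fin n) ℂ)
    (hVperp : Vperpᴴ * Vperp = 1) (hVperpv : Vperpᴴ *ᵥ v = 0)
    (Sig Sigt : Matrix (Fin n ⊕ Fin 1) (Fin n ⊕ Fin 1) ℂ)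
    (hSig : Sig.PosDef) (hSigt : Sigt.PosDef)
    (Gt : Matrix (Fin n ⊕ Fin 1) (Fin n ⊕ Fin 1) ℂ) (hGt : IsUnit Gt.det)
    (hGtSigt : Sigt = Gt * Gtᴴ)
    (Ft : Matrix (Fin n) (Fin n) ℂ) (hFt : IsUnit Ft.det)
    (hFtFt : Ft * Ftᴴ = Vperpᴴ * Sigt * Vperp)
    (Q : Matrix (Fin n ⊕ Fin 1) (Fin n ⊕ Fin 1) ℂ)
    (hQ : Q = fromCols (Gtᴴ * Vperp * (Ft⁻¹)ᴴ)
        (replicateCol (Fin 1) (((Real.sqrt ((star v ⬝ᵥ (Sigt⁻¹ *ᵥ v)).re) : ℝ) : ℂ)⁻¹ •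
          (Gt⁻¹ *ᵥ v))))
    (Ω : Matrix (Fin n ⊕ Fin 1) (Fin n ⊕ Fin 1) ℂ)
    (hΩ : Ω = Qᴴ * (Gt⁻¹ * Sig * (Gt⁻¹)ᴴ) * Q) :
    Ω.toBlocks₂₁ = 0 ↔ star v ᵥ* (Sigt⁻¹ * Sig * Vperp) = 0 :=
  stmt_6_general v Vperp Sig Sigt Gt hGt hGtSigt Ft hFt Q hQ Ω hΩ
end

section
/- Let N ≥ 2, let v ∈ ℂᴺ be nonzero, let V⊥ be an N×(N−1) complex matrix with V⊥ᴴV⊥ = I_{N−1} and V⊥ᴴv = 0, and let Σ and Σ_t be Hermitian positive definite N×N complex matrices. Then the following are equivalent: (i) vᴴ Σ_t⁻¹ Σ V⊥ = 0 (the zero 1×(N−1) row); (ii) there exists λ ∈ ℂ such that Σ Σ_t⁻¹ v = λ v; (iii) there exists λ ∈ ℂ such that Σ_t⁻¹ v = λ Σ⁻¹ v. -/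
open Matrix
open scoped ComplexOrder

/-!
The columns of `V⊥` are orthonormal, so `V⊥ᴴ` is surjective and by rank–nullity its kernel
is the line spanned by `v`. Since `Σ` and `Σ_t⁻¹` are Hermitian, (i) is the conjugate transpose of
`V⊥ᴴ (Σ Σ_t⁻¹ v) = 0`, i.e. of `Σ Σ_t⁻¹ v ∈ ℂ v`, which is (ii). Multiplying by `Σ⁻¹` turns (ii)
into (iii) with the same `λ`.
-/

namespace Matrix

theorem vecMul_star_eq_zero_iff {α m n : Type*} [Fintype m] [NonUnitalSemiring α] [StarRing α]
    (A : Matrix m n α) (v : m → α) : star v ᵥ* A = 0 ↔ Aᴴ *ᵥ v = 0 := by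
  rw [← star_eq_zero, star_vecMul, star_star]

variable {K m n : Type*} [Field K] [Fintype m] [Fintype n]

theorem exists_smul_eq_of_mulVec_eq_zero {A : Matrix n m K} (hA : Function.Surjective A.mulVec)
    (hcard : Fintype.card m = Fintype.card n + 1) {v w : m → K} (hv : v ≠ 0)
    (hAv : A *ᵥ v = 0) (hAw : A *ᵥ w = 0) : ∃ c : K, c • v = w := by
  have hker : Module.finrank K (LinearMap.ker A.mulVecLin) = 1 := by
    have := LinearMap.finrank_range_add_finrank_ker A.mulVecLin
    rw [LinearMap.range_eq_top.mpr hA, finrank_top, Module.finrank_fintype_fun_eq_card,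
      Module.finrank_fintype_fun_eq_card] at this
    omega
  obtain ⟨c, hc⟩ := (finrank_eq_one_iff_of_nonzero' (⟨v, hAv⟩ : LinearMap.ker A.mulVecLin)
    fun h => hv (congrArg Subtype.val h)).mp hker ⟨w, hAw⟩
  exact ⟨c, congrArg Subtype.val hc⟩

theorem mulVec_eq_zero_iff_exists_eq_smul [DecidableEq n] {A : Matrix n m K} {B : Matrix m n K}
    (hAB : A * B = 1) (hcard : Fintype.card m = Fintype.card n + 1) {v : m → K} (hv : v ≠ 0)
    (hAv : A *ᵥ v = 0) (w : m → K) : A *ᵥ w = 0 ↔ ∃ c : K, w = c • v := by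
  refine ⟨fun hAw => ?_, fun ⟨c, hc⟩ => by rw [hc, mulVec_smul, hAv, smul_zero]⟩
  obtain ⟨c, hc⟩ := exists_smul_eq_of_mulVec_eq_zero
    (mulVec_surjective_iff_exists_right_inverse.mpr ⟨B, hAB⟩) hcard hv hAv hAw
  exact ⟨c, hc.symm⟩

theorem mul_mulVec_eq_smul_iff [DecidableEq m] {S T : Matrix m m K} (hS : IsUnit S) (v : m → K)
    (c : K) : (S * T) *ᵥ v = c • v ↔ T *ᵥ v = c • (S⁻¹ *ᵥ v) := by
  have hS' : IsUnit S.det := (isUnit_iff_isUnit_det S).mp hS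
  rw [← (mulVec_injective_of_isUnit hS).eq_iff (a := T *ᵥ v), mulVec_smul]
  simp only [mulVec_mulVec, mul_nonsing_inv S hS', one_mulVec]

end Matrix

theorem stmt_7_general {n : ℕ}
    (v : (Fin n ⊕ Fin 1) → ℂ) (hv : v ≠ 0)
    (Vperp : Matrix (Fin n ⊕ Fin 1) (Fin n) ℂ)
    (hVperp : Vperpᴴ * Vperp = 1) (hVperpv : Vperpᴴ *ᵥ v = 0)
    (Sig Sigt : Matrix (Fin n ⊕ Fin 1) (Fin n ⊕ Fin 1) ℂ)
    (hSig : Sig.PosDef) (hSigt : Sigt.PosDef) :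
    ((star v ᵥ* (Sigt⁻¹ * Sig * Vperp) = 0) ↔
      ∃ l : ℂ, (Sig * Sigt⁻¹) *ᵥ v = l • v) ∧
    ((∃ l : ℂ, (Sig * Sigt⁻¹) *ᵥ v = l • v) ↔
      ∃ l : ℂ, Sigt⁻¹ *ᵥ v = l • (Sig⁻¹ *ᵥ v)) := by
  have hi : star v ᵥ* (Sigt⁻¹ * Sig * Vperp) = 0 ↔ Vperpᴴ *ᵥ ((Sig * Sigt⁻¹) *ᵥ v) = 0 := by
    rw [vecMul_star_eq_zero_iff, conjTranspose_mul, conjTranspose_mul, hSig.isHermitian.eq,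
      hSigt.isHermitian.inv.eq, mulVec_mulVec]
  exact ⟨hi.trans (mulVec_eq_zero_iff_exists_eq_smul hVperp (by simp) hv hVperpv _),
    exists_congr fun l => mul_mulVec_eq_smul_iff hSig.isUnit v l⟩

/-- equivalent characterizations of the generalized eigenrelation (GER). -/
theorem stmt_7 {n : ℕ} (hn : 1 ≤ n)
    (v : (Fin n ⊕ Fin 1) → ℂ) (hv : v ≠ 0)
    (Vperp : Matrix (Fin n ⊕ Fin 1) (Fin n) ℂ)
    (hVperp : Vperpᴴ * Vperp = 1) (hVperpv : Vperpᴴ *ᵥ v = 0)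
    (Sig Sigt : Matrix (Fin n ⊕ Fin 1) (Fin n ⊕ Fin 1) ℂ)
    (hSig : Sig.PosDef) (hSigt : Sigt.PosDef) :
    ((star v ᵥ* (Sigt⁻¹ * Sig * Vperp) = 0) ↔
      ∃ l : ℂ, (Sig * Sigt⁻¹) *ᵥ v = l • v) ∧
    ((∃ l : ℂ, (Sig * Sigt⁻¹) *ᵥ v = l • v) ↔
      ∃ l : ℂ, Sigt⁻¹ *ᵥ v = l • (Sig⁻¹ *ᵥ v)) :=
  stmt_7_general v hv Vperp hVperp hVperpv Sig Sigt hSig hSigt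
end

section
/- Let N ≥ 2, let v ∈ ℂᴺ with ‖v‖ = 1, let V⊥ be an N×(N−1) complex matrix with V⊥ᴴV⊥ = I_{N−1} and V⊥ᴴv = 0, let Σ and Σ_t be Hermitian positive definite N×N complex matrices, let G_t be invertible with Σ_t = G_t G_tᴴ, let F_t be invertible with F_t F_tᴴ = V⊥ᴴ Σ_t V⊥, and let Q be the unitary matrix whose first N−1 columns are G_tᴴ V⊥ F_t⁻ᴴ and whose last column is (vᴴΣ_t⁻¹v)^{−1/2} G_t⁻¹ v. Define Ω := Qᴴ G_t⁻¹ Σ G_t⁻ᴴ Q, partitioned into blocks Ω₁₁ ((N−1)×(N−1)), Ω₁₂, Ω₂₁, Ω₂₂ (1×1). Then Ω₁₁ is invertible and the scalar Schur complement satisfies Ω₂.₁ := Ω₂₂ − Ω₂₁ Ω₁₁⁻¹ Ω₁₂ = (vᴴ Σ_t⁻¹ v)/(vᴴ Σ⁻¹ v). -/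
/-!
The columns of `Q` are orthonormal: the first block because `F_t F_tᴴ = V⊥ᴴ Σ_t V⊥`, the last
column `q` by its normalisation, and the two are orthogonal because `V⊥ᴴ v = 0`. Hence `Ω` is a
unitary conjugate of the positive definite `G_t⁻¹ Σ G_t⁻ᴴ`, so `Ω` and `Ω₁₁` are positive definite
and `Ω⁻¹ = Qᴴ G_tᴴ Σ⁻¹ G_t Q`. By the block inverse formula the scalar Schur complement `Ω₂.₁` is
the reciprocal of the `(2,2)` entry of `Ω⁻¹`, which is `qᴴ G_tᴴ Σ⁻¹ G_t q = vᴴΣ⁻¹v / vᴴΣ_t⁻¹v`.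
-/

open Matrix
open scoped ComplexOrder

namespace Matrix

variable {α : Type*} {ι l m n : Type*}

theorem toBlocks₂₂_inv_eq_inv_schur [CommRing α] [Fintype m] [Fintype n] [DecidableEq m]
    [DecidableEq n] (M : Matrix (m ⊕ n) (m ⊕ n) α) (hM : IsUnit M.det)
    (hA : IsUnit M.toBlocks₁₁.det) :
    M⁻¹.toBlocks₂₂ = (M.toBlocks₂₂ - M.toBlocks₂₁ * M.toBlocks₁₁⁻¹ * M.toBlocks₁₂)⁻¹ := by
  obtain ⟨A, B, C, D, rfl⟩ : ∃ A B C D, M = fromBlocks A B C D :=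
    ⟨_, _, _, _, (fromBlocks_toBlocks M).symm⟩
  simp only [toBlocks_fromBlocks₁₁, toBlocks_fromBlocks₁₂, toBlocks_fromBlocks₂₁,
    toBlocks_fromBlocks₂₂] at hA ⊢
  let := invertibleOfIsUnitDet _ hA
  let := invertibleOfIsUnitDet _ hM
  let := invertibleOfFromBlocks₁₁Invertible A B C D
  simpa [invOf_eq_nonsing_inv] using congrArg toBlocks₂₂ (invOf_fromBlocks₁₁_eq A B C D)

theorem conjTranspose_fromCols_mul_mul_fromCols [Semiring α] [StarRing α] [Fintype l]
    (N : Matrix l l α) (U : Matrix l m α) (w : Matrix l n α) :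
    (fromCols U w)ᴴ * N * fromCols U w =
      fromBlocks (Uᴴ * N * U) (Uᴴ * N * w) (wᴴ * N * U) (wᴴ * N * w) := by
  rw [conjTranspose_fromCols_eq_fromRows_conjTranspose, fromRows_mul, fromRows_mul_fromCols]

theorem conjTranspose_fromCols_mul_fromCols_eq_one [Semiring α] [StarRing α] [Fintype l]
    [DecidableEq m] [DecidableEq n] {U : Matrix l m α} {w : Matrix l n α} (hU : Uᴴ * U = 1)
    (hUw : Uᴴ * w = 0) (hw : wᴴ * w = 1) : (fromCols U w)ᴴ * fromCols U w = 1 := by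
  have hwU : wᴴ * U = 0 := by simpa using congrArg conjTranspose hUw
  rw [conjTranspose_fromCols_eq_fromRows_conjTranspose, fromRows_mul_fromCols, hU, hUw, hwU, hw,
    fromBlocks_one]

theorem conjTranspose_replicateCol_mul_mul_replicateCol [Fintype m] [NonUnitalSemiring α]
    [StarRing α] (N : Matrix m m α) (x : m → α) :
    (replicateCol ι x)ᴴ * N * replicateCol ι x = of fun _ _ => star x ⬝ᵥ (N *ᵥ x) := by
  rw [conjTranspose_replicateCol, Matrix.mul_assoc, ← replicateCol_mulVec,
    replicateRow_mul_replicateCol]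

theorem star_mulVec_dotProduct_mulVec_mulVec [Fintype m] [Fintype n] [CommSemiring α]
    [StarRing α] (A : Matrix m n α) (N : Matrix m m α) (v : n → α) :
    star (A *ᵥ v) ⬝ᵥ (N *ᵥ (A *ᵥ v)) = star v ⬝ᵥ ((Aᴴ * N * A) *ᵥ v) := by
  simp only [star_mulVec, dotProduct_mulVec, vecMul_vecMul, Matrix.mul_assoc]

theorem inv_conjTranspose_mul_mul_eq [CommRing α] [StarRing α] [Fintype m] [DecidableEq m]
    {Q : Matrix m m α} (hQ : Qᴴ * Q = 1) (M : Matrix m m α) :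
    (Qᴴ * M * Q)⁻¹ = Qᴴ * M⁻¹ * Q := by
  have hQinv : Q⁻¹ = Qᴴ := inv_eq_left_inv hQ
  rw [Matrix.mul_inv_rev, Matrix.mul_inv_rev, hQinv, ← conjTranspose_nonsing_inv, hQinv,
    conjTranspose_conjTranspose, Matrix.mul_assoc]

theorem inv_inv_mul_mul_conjTranspose_inv [CommRing α] [StarRing α] [Fintype m] [DecidableEq m]
    {G : Matrix m m α} (hG : IsUnit G.det) (S : Matrix m m α) :
    (G⁻¹ * S * G⁻¹ᴴ)⁻¹ = Gᴴ * S⁻¹ * G := by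
  rw [Matrix.mul_inv_rev, Matrix.mul_inv_rev, ← conjTranspose_nonsing_inv,
    nonsing_inv_nonsing_inv _ hG, Matrix.mul_assoc]

theorem conjTranspose_inv_mul_conjTranspose_mul_mul_mul_inv [CommRing α] [StarRing α] [Fintype m]
    [DecidableEq m] {G : Matrix m m α} (hG : IsUnit G.det) (S : Matrix m m α) :
    G⁻¹ᴴ * (Gᴴ * S * G) * G⁻¹ = S := by
  have hGH : IsUnit Gᴴ.det := by rw [det_conjTranspose]; exact hG.star
  rw [conjTranspose_nonsing_inv, Matrix.mul_assoc, Matrix.mul_assoc, mul_nonsing_inv _ hG,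
    Matrix.mul_one, ← Matrix.mul_assoc, nonsing_inv_mul _ hGH, Matrix.one_mul]

theorem conjTranspose_mul_conjTranspose_inv_orthonormal [CommRing α] [StarRing α] [Fintype l]
    [Fintype m] [DecidableEq m] {X : Matrix l m α} {F : Matrix m m α} (hF : IsUnit F.det)
    (hXF : F * Fᴴ = Xᴴ * X) : (X * F⁻¹ᴴ)ᴴ * (X * F⁻¹ᴴ) = 1 := by
  have hFH : IsUnit Fᴴ.det := by rw [det_conjTranspose]; exact hF.star
  rw [conjTranspose_mul, conjTranspose_conjTranspose, Matrix.mul_assoc, ← Matrix.mul_assoc Xᴴ,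
    ← hXF, conjTranspose_nonsing_inv, Matrix.mul_assoc, mul_nonsing_inv _ hFH, Matrix.mul_one,
    nonsing_inv_mul _ hF]

end Matrix

theorem Complex.ofReal_sqrt_re_sq {z : ℂ} (hz : 0 ≤ z) : ((√z.re : ℝ) : ℂ) ^ 2 = z := by
  rw [← Complex.ofReal_pow, Real.sq_sqrt (Complex.nonneg_iff.1 hz).1]
  exact (Complex.eq_re_of_ofReal_le hz).symm

theorem star_inv_sqrt_smul_dotProduct_mulVec_inv_sqrt_smul {m : Type*} [Fintype m] {α : ℂ}
    (hα : 0 ≤ α) (N : Matrix m m ℂ) (y : m → ℂ) :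
    star (((√α.re : ℝ) : ℂ)⁻¹ • y) ⬝ᵥ (N *ᵥ (((√α.re : ℝ) : ℂ)⁻¹ • y)) =
      star y ⬝ᵥ (N *ᵥ y) / α := by
  rw [star_smul, mulVec_smul, smul_dotProduct, dotProduct_smul, smul_eq_mul, smul_eq_mul,
    ← mul_assoc, star_inv₀, Complex.star_def, Complex.conj_ofReal, ← mul_inv, ← sq,
    Complex.ofReal_sqrt_re_sq hα, div_eq_inv_mul]

theorem conjTranspose_replicateCol_mul_mul_replicateCol_inv_sqrt_smul_mulVec {ι m n : Type*}
    [Fintype m] [Fintype n] {α : ℂ} (hα : 0 ≤ α) (A : Matrix m n ℂ) (N : Matrix m m ℂ)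
    (v : n → ℂ) :
    (replicateCol ι (((√α.re : ℝ) : ℂ)⁻¹ • (A *ᵥ v)))ᴴ * N *
        replicateCol ι (((√α.re : ℝ) : ℂ)⁻¹ • (A *ᵥ v)) =
      of fun _ _ => star v ⬝ᵥ ((Aᴴ * N * A) *ᵥ v) / α := by
  rw [conjTranspose_replicateCol_mul_mul_replicateCol,
    star_inv_sqrt_smul_dotProduct_mulVec_inv_sqrt_smul hα, star_mulVec_dotProduct_mulVec_mulVec]

theorem conjTranspose_fromCols_whitened_mul_self {m k : Type*} [Fintype m] [DecidableEq m]
    [Fintype k] [DecidableEq k] {v : m → ℂ} {V : Matrix m k ℂ} {S G : Matrix m m ℂ}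
    {F : Matrix k k ℂ} (hα : 0 < star v ⬝ᵥ (S⁻¹ *ᵥ v)) (hVv : Vᴴ *ᵥ v = 0) (hG : IsUnit G.det)
    (hSG : S = G * Gᴴ) (hF : IsUnit F.det) (hFF : F * Fᴴ = Vᴴ * S * V) :
    (fromCols (Gᴴ * V * F⁻¹ᴴ)
        (replicateCol (Fin 1) (((√(star v ⬝ᵥ (S⁻¹ *ᵥ v)).re : ℝ) : ℂ)⁻¹ • (G⁻¹ *ᵥ v))))ᴴ *
      fromCols (Gᴴ * V * F⁻¹ᴴ)
        (replicateCol (Fin 1) (((√(star v ⬝ᵥ (S⁻¹ *ᵥ v)).re : ℝ) : ℂ)⁻¹ • (G⁻¹ *ᵥ v))) = 1 := by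
  refine conjTranspose_fromCols_mul_fromCols_eq_one ?_ ?_ ?_
  · refine conjTranspose_mul_conjTranspose_inv_orthonormal hF ?_
    rw [hFF, hSG, conjTranspose_mul, conjTranspose_conjTranspose]
    simp only [Matrix.mul_assoc]
  · rw [← replicateCol_mulVec, mulVec_smul, conjTranspose_mul, conjTranspose_mul,
      conjTranspose_conjTranspose, conjTranspose_conjTranspose, ← mulVec_mulVec,
      ← mulVec_mulVec, mulVec_mulVec _ G, mul_nonsing_inv _ hG, one_mulVec, hVv,
      mulVec_zero, smul_zero, replicateCol_zero]
  · have hSinv : S⁻¹ = G⁻¹ᴴ * G⁻¹ := by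
      rw [hSG, Matrix.mul_inv_rev, conjTranspose_nonsing_inv]
    rw [← Matrix.mul_one (replicateCol _ _)ᴴ,
      conjTranspose_replicateCol_mul_mul_replicateCol_inv_sqrt_smul_mulVec hα.le, Matrix.mul_one,
      ← hSinv, div_self hα.ne']
    ext i j
    simp [one_apply, Subsingleton.elim i j]

theorem stmt_9_general {n : ℕ}
    (v : (Fin n ⊕ Fin 1) → ℂ) (hv : star v ⬝ᵥ v = 1)
    (Vperp : Matrix (Fin n ⊕ Fin 1) (Fin n) ℂ)
    (hVperpv : Vperpᴴ *ᵥ v = 0)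
    (Sig Sigt : Matrix (Fin n ⊕ Fin 1) (Fin n ⊕ Fin 1) ℂ)
    (hSig : Sig.PosDef) (hSigt : Sigt.PosDef)
    (Gt : Matrix (Fin n ⊕ Fin 1) (Fin n ⊕ Fin 1) ℂ) (hGt : IsUnit Gt.det)
    (hGtSigt : Sigt = Gt * Gtᴴ)
    (Ft : Matrix (Fin n) (Fin n) ℂ) (hFt : IsUnit Ft.det)
    (hFtFt : Ft * Ftᴴ = Vperpᴴ * Sigt * Vperp)
    (Q : Matrix (Fin n ⊕ Fin 1) (Fin n ⊕ Fin 1) ℂ)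
    (hQ : Q = fromCols (Gtᴴ * Vperp * (Ft⁻¹)ᴴ)
        (replicateCol (Fin 1) (((Real.sqrt ((star v ⬝ᵥ (Sigt⁻¹ *ᵥ v)).re) : ℝ) : ℂ)⁻¹ •
          (Gt⁻¹ *ᵥ v))))
    (Ω : Matrix (Fin n ⊕ Fin 1) (Fin n ⊕ Fin 1) ℂ)
    (hΩ : Ω = Qᴴ * (Gt⁻¹ * Sig * (Gt⁻¹)ᴴ) * Q) :
    IsUnit Ω.toBlocks₁₁.det ∧
    (Ω.toBlocks₂₂ - Ω.toBlocks₂₁ * Ω.toBlocks₁₁⁻¹ * Ω.toBlocks₁₂) 0 0 =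
      (star v ⬝ᵥ (Sigt⁻¹ *ᵥ v)) / (star v ⬝ᵥ (Sig⁻¹ *ᵥ v)) := by
  have hα : 0 < star v ⬝ᵥ (Sigt⁻¹ *ᵥ v) :=
    hSigt.inv.dotProduct_mulVec_pos (by rintro rfl; simp at hv)
  have hQQ : Qᴴ * Q = 1 := by
    rw [hQ]; exact conjTranspose_fromCols_whitened_mul_self hα hVperpv hGt hGtSigt hFt hFtFt
  have hGtinv : IsUnit Gt⁻¹ := isUnit_nonsing_inv_iff.2 ((isUnit_iff_isUnit_det _).2 hGt)
  have hΩpd : Ω.PosDef := hΩ ▸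
    ((isUnit_iff_isUnit_det Q).2 (isUnit_det_of_left_inverse hQQ)).posDef_star_left_conjugate_iff.2
      (hGtinv.posDef_star_right_conjugate_iff.2 hSig)
  have hΩ₁₁ : IsUnit Ω.toBlocks₁₁.det :=
    (isUnit_iff_isUnit_det _).1 (hΩpd.submatrix Sum.inl_injective).isUnit
  refine ⟨hΩ₁₁, ?_⟩
  have hΩinv₂₂ : Ω⁻¹.toBlocks₂₂ 0 0 = star v ⬝ᵥ (Sig⁻¹ *ᵥ v) / star v ⬝ᵥ (Sigt⁻¹ *ᵥ v) := by
    rw [hΩ, inv_conjTranspose_mul_mul_eq hQQ, inv_inv_mul_mul_conjTranspose_inv hGt, hQ,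
      conjTranspose_fromCols_mul_mul_fromCols, toBlocks_fromBlocks₂₂,
      conjTranspose_replicateCol_mul_mul_replicateCol_inv_sqrt_smul_mulVec hα.le,
      conjTranspose_inv_mul_conjTranspose_mul_mul_mul_inv hGt, of_apply]
  rw [toBlocks₂₂_inv_eq_inv_schur Ω ((isUnit_iff_isUnit_det _).1 hΩpd.isUnit) hΩ₁₁,
    inv_subsingleton (m := Fin 1), diagonal_apply_eq, Ring.inverse_eq_inv'] at hΩinv₂₂
  rw [← inv_div, ← hΩinv₂₂, inv_inv]

/-- Ω₁₁ is invertible and the scalar Schur complement of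
Ω = Qᴴ G_t⁻¹ Σ G_t⁻ᴴ Q equals (vᴴΣ_t⁻¹v)/(vᴴΣ⁻¹v). -/
theorem stmt_9 {n : ℕ} (hn : 1 ≤ n)
    (v : (Fin n ⊕ Fin 1) → ℂ) (hv : star v ⬝ᵥ v = 1)
    (Vperp : Matrix (Fin n ⊕ Fin 1) (Fin n) ℂ)
    (hVperp : Vperpᴴ * Vperp = 1) (hVperpv : Vperpᴴ *ᵥ v = 0)
    (Sig Sigt : Matrix (Fin n ⊕ Fin 1) (Fin n ⊕ Fin 1) ℂ)
    (hSig : Sig.PosDef) (hSigt : Sigt.PosDef)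
    (Gt : Matrix (Fin n ⊕ Fin 1) (Fin n ⊕ Fin 1) ℂ) (hGt : IsUnit Gt.det)
    (hGtSigt : Sigt = Gt * Gtᴴ)
    (Ft : Matrix (Fin n) (Fin n) ℂ) (hFt : IsUnit Ft.det)
    (hFtFt : Ft * Ftᴴ = Vperpᴴ * Sigt * Vperp)
    (Q : Matrix (Fin n ⊕ Fin 1) (Fin n ⊕ Fin 1) ℂ)
    (hQ : Q = fromCols (Gtᴴ * Vperp * (Ft⁻¹)ᴴ)
        (replicateCol (Fin 1) (((Real.sqrt ((star v ⬝ᵥ (Sigt⁻¹ *ᵥ v)).re) : ℝ) : ℂ)⁻¹ •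
          (Gt⁻¹ *ᵥ v))))
    (Ω : Matrix (Fin n ⊕ Fin 1) (Fin n ⊕ Fin 1) ℂ)
    (hΩ : Ω = Qᴴ * (Gt⁻¹ * Sig * (Gt⁻¹)ᴴ) * Q) :
    IsUnit Ω.toBlocks₁₁.det ∧
    (Ω.toBlocks₂₂ - Ω.toBlocks₂₁ * Ω.toBlocks₁₁⁻¹ * Ω.toBlocks₁₂) 0 0 =
      (star v ⬝ᵥ (Sigt⁻¹ *ᵥ v)) / (star v ⬝ᵥ (Sig⁻¹ *ᵥ v)) :=
  stmt_9_general v hv Vperp hVperpv Sig Sigt hSig hSigt Gt hGt hGtSigt Ft hFt hFtFt Q hQ Ω hΩ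
end

section
/- Let N ≥ 2, let U be a unitary N×N complex matrix, let Λ be a diagonal N×N real matrix with positive diagonal entries, and set Σ := U Λ Uᴴ. Let v ∈ ℂᴺ with ‖v‖ = 1, let V⊥ be an N×(N−1) complex matrix with V⊥ᴴV⊥ = I_{N−1} and V⊥ᴴv = 0, and let F be an invertible (N−1)×(N−1) matrix with F Fᴴ = V⊥ᴴ Σ V⊥. Let γ := vᴴ Σ⁻¹ v (a positive real number) and let V be the N×N matrix whose first N−1 columns are Λ^{1/2} Uᴴ V⊥ F⁻ᴴ and whose last column is γ^{−1/2} Λ^{−1/2} Uᴴ v. Let ℓ₁(1),…,ℓ₁(N−1) and ℓ₂ be positive real numbers, let D be the diagonal matrix with diagonal entries ℓ₁(1)⁻¹,…,ℓ₁(N−1)⁻¹, ℓ₂⁻¹, set W_t := V D Vᴴ and Σ_t := U Λ^{1/2} W_t Λ^{1/2} Uᴴ. Then V is unitary, Σ_t is Hermitian positive definite, and the generalized eigenrelation Σ_t⁻¹ v = ℓ₂ Σ⁻¹ v holds. -/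
/-!
Write `R := U Λ^{1/2}`, so that `Σ = R Rᴴ` and `Σ_t = R W_t Rᴴ`. The first `N - 1` columns
`Rᴴ V⊥ F⁻ᴴ` of `V` are orthonormal because `F Fᴴ = V⊥ᴴ R Rᴴ V⊥`, and they are orthogonal to
`R⁻¹ v` because `V⊥ᴴ v = 0`; since `‖R⁻¹ v‖² = vᴴ Σ⁻¹ v = γ`, the last column is the unit vector
`γ^{-1/2} R⁻¹ v`. Hence `V` is unitary, `Σ_t = (R V) D (R V)ᴴ` is congruent to the positive
diagonal `D`, and `R⁻¹ v` is an eigenvector of `W_t = V D Vᴴ` for `ℓ₂⁻¹`, which gives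
`Σ_t Σ⁻¹ v = R W_t R⁻¹ v = ℓ₂⁻¹ v`.
-/

open Matrix
open scoped ComplexOrder

namespace Matrix

section Frame

variable {α : Type*} [CommRing α] {l m : Type*} {A : Matrix l m α} {w : l → α}

theorem fromCols_replicateCol_mulVec_sumElim_zero_one [Fintype m] :
    fromCols A (replicateCol (Fin 1) w) *ᵥ Sum.elim (0 : m → α) 1 = w := by
  ext i
  simp [mulVec, dotProduct]

variable [StarRing α]

theorem conjTranspose_mul_self_fromCols_replicateCol [Fintype l] [DecidableEq m]
    (hA : Aᴴ * A = 1) (hAw : Aᴴ *ᵥ w = 0) (hw : star w ⬝ᵥ w = 1) :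
    (fromCols A (replicateCol (Fin 1) w))ᴴ * fromCols A (replicateCol (Fin 1) w) = 1 := by
  have hAw' : Aᴴ * replicateCol (Fin 1) w = 0 := by
    rw [← replicateCol_mulVec, hAw, replicateCol_zero]
  have hwA : replicateRow (Fin 1) (star w) * A = 0 := by
    simpa [conjTranspose_replicateCol] using congrArg conjTranspose hAw'
  have hww : replicateRow (Fin 1) (star w) * replicateCol (Fin 1) w = 1 := by
    ext i j
    rw [replicateRow_mul_replicateCol_apply, hw, Subsingleton.elim i j, one_apply_eq]
  rw [conjTranspose_fromCols_eq_fromRows_conjTranspose, conjTranspose_replicateCol,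
    fromRows_mul_fromCols, hA, hAw', hwA, hww, fromBlocks_one]

theorem conjTranspose_fromCols_replicateCol_mulVec_self [Fintype l] (hAw : Aᴴ *ᵥ w = 0)
    (hw : star w ⬝ᵥ w = 1) :
    (fromCols A (replicateCol (Fin 1) w))ᴴ *ᵥ w = Sum.elim (0 : m → α) 1 := by
  rw [conjTranspose_fromCols_eq_fromRows_conjTranspose, conjTranspose_replicateCol,
    fromRows_mulVec, hAw, replicateRow_mulVec_eq_const, hw]
  rfl

theorem fromCols_replicateCol_mul_diagonal_mul_conjTranspose_mulVec [Fintype l] [Fintype m]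
    [DecidableEq m] (hAw : Aᴴ *ᵥ w = 0) (hw : star w ⬝ᵥ w = 1) (d : m → α) (e : α) :
    (fromCols A (replicateCol (Fin 1) w) * diagonal (Sum.elim d fun _ : Fin 1 => e) *
      (fromCols A (replicateCol (Fin 1) w))ᴴ) *ᵥ w = e • w := by
  have hD : diagonal (Sum.elim d fun _ : Fin 1 => e) *ᵥ Sum.elim (0 : m → α) 1 =
      e • Sum.elim (0 : m → α) 1 := by
    ext (i | i) <;> simp [mulVec_diagonal]
  rw [← mulVec_mulVec, ← mulVec_mulVec, conjTranspose_fromCols_replicateCol_mulVec_self hAw hw,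
    hD, mulVec_smul, fromCols_replicateCol_mulVec_sumElim_zero_one]

end Frame

section Field

variable {K : Type*} [Field K] {m n : Type*}

theorem inv_mulVec_eq_smul_of_mulVec_eq_smul [Fintype n] [DecidableEq n] {M : Matrix n n K}
    (hM : IsUnit M.det) {u v : n → K} {e : K} (he : e ≠ 0) (h : M *ᵥ u = e • v) :
    M⁻¹ *ᵥ v = e⁻¹ • u := by
  rw [← inv_smul_smul₀ he v, ← h, mulVec_smul, mulVec_mulVec, nonsing_inv_mul _ hM, one_mulVec]

variable [StarRing K]

theorem conjTranspose_mul_self_mul_conjTranspose_inv [Fintype m] [DecidableEq m] [Fintype n]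
    {B : Matrix n m K} {F : Matrix m m K} (hF : IsUnit F.det) (hB : Bᴴ * B = F * Fᴴ) :
    (B * (F⁻¹)ᴴ)ᴴ * (B * (F⁻¹)ᴴ) = 1 := by
  have hFH : IsUnit Fᴴ.det := by rwa [det_conjTranspose, isUnit_star]
  rw [conjTranspose_mul, conjTranspose_conjTranspose, Matrix.mul_assoc, ← Matrix.mul_assoc Bᴴ,
    hB, conjTranspose_nonsing_inv, Matrix.mul_assoc, mul_nonsing_inv _ hFH,
    Matrix.mul_one, nonsing_inv_mul _ hF]

theorem star_dotProduct_inv_mul_conjTranspose_mulVec [Fintype n] [DecidableEq n]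
    (R : Matrix n n K) (v : n → K) :
    star v ⬝ᵥ ((R * Rᴴ)⁻¹ *ᵥ v) = star (R⁻¹ *ᵥ v) ⬝ᵥ (R⁻¹ *ᵥ v) := by
  rw [star_mulVec, ← dotProduct_mulVec, mulVec_mulVec, mul_inv_rev, conjTranspose_nonsing_inv]

theorem mul_mul_conjTranspose_mulVec_inv_mul_conjTranspose_mulVec [Fintype n] [DecidableEq n]
    {R W : Matrix n n K} (hR : IsUnit R.det) {v : n → K} {e : K}
    (hW : W *ᵥ (R⁻¹ *ᵥ v) = e • (R⁻¹ *ᵥ v)) :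
    (R * W * Rᴴ) *ᵥ ((R * Rᴴ)⁻¹ *ᵥ v) = e • v := by
  have hRH : IsUnit Rᴴ.det := by rwa [det_conjTranspose, isUnit_star]
  rw [mulVec_mulVec, mul_inv_rev, Matrix.mul_assoc, ← Matrix.mul_assoc Rᴴ,
    mul_nonsing_inv _ hRH, Matrix.one_mul, ← mulVec_mulVec, ← mulVec_mulVec, hW, mulVec_smul,
    mulVec_mulVec, mul_nonsing_inv _ hR, one_mulVec]

end Field

theorem star_inv_sqrt_smul_dotProduct_self {n : Type*} [Fintype n] {x : n → ℂ} {γ : ℝ}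
    (hγ : 0 < γ) (hx : (γ : ℂ) = star x ⬝ᵥ x) :
    star (((√γ : ℝ) : ℂ)⁻¹ • x) ⬝ᵥ (((√γ : ℝ) : ℂ)⁻¹ • x) = 1 := by
  rw [star_smul, smul_dotProduct, dotProduct_smul, ← hx, star_inv₀, Complex.star_def,
    Complex.conj_ofReal, smul_eq_mul, smul_eq_mul, ← Complex.ofReal_inv, ← Complex.ofReal_mul,
    ← Complex.ofReal_mul, ← Complex.ofReal_one]
  congr 1
  have := Real.sq_sqrt hγ.le
  field_simp
  linarith

section Whitening

variable {m : Type*} [Fintype m] [DecidableEq m] {R V : Matrix (m ⊕ Fin 1) (m ⊕ Fin 1) ℂ}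
  {v : m ⊕ Fin 1 → ℂ} {Vperp : Matrix (m ⊕ Fin 1) m ℂ} {F : Matrix m m ℂ} {γ : ℝ}

theorem whitenedFrame_spec (hR : IsUnit R.det) (hVperpv : Vperpᴴ *ᵥ v = 0) (hF : IsUnit F.det)
    (hFF : F * Fᴴ = Vperpᴴ * (R * Rᴴ) * Vperp) (hγpos : 0 < γ)
    (hγ : (γ : ℂ) = star v ⬝ᵥ ((R * Rᴴ)⁻¹ *ᵥ v))
    (hV : V = fromCols (Rᴴ * Vperp * (F⁻¹)ᴴ)
      (replicateCol (Fin 1) (((√γ : ℝ) : ℂ)⁻¹ • (R⁻¹ *ᵥ v))))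
    (d : m → ℂ) (hd : ∀ i, 0 < d i) (e : ℂ) (he : 0 < e) :
    Vᴴ * V = 1 ∧ (R * (V * diagonal (Sum.elim d fun _ : Fin 1 => e) * Vᴴ) * Rᴴ).PosDef ∧
      (R * (V * diagonal (Sum.elim d fun _ : Fin 1 => e) * Vᴴ) * Rᴴ)⁻¹ *ᵥ v =
        e⁻¹ • ((R * Rᴴ)⁻¹ *ᵥ v) := by
  set A := Rᴴ * Vperp * (F⁻¹)ᴴ
  set x := R⁻¹ *ᵥ v
  set w := ((√γ : ℝ) : ℂ)⁻¹ • x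
  set D := diagonal (Sum.elim d fun _ : Fin 1 => e)
  have hA : Aᴴ * A = 1 := conjTranspose_mul_self_mul_conjTranspose_inv hF <| by
    rw [hFF, conjTranspose_mul, conjTranspose_conjTranspose, Matrix.mul_assoc, Matrix.mul_assoc,
      Matrix.mul_assoc]
  have hAx : Aᴴ *ᵥ x = 0 := by
    rw [mulVec_mulVec, conjTranspose_mul, conjTranspose_mul, conjTranspose_conjTranspose,
      conjTranspose_conjTranspose, Matrix.mul_assoc, Matrix.mul_assoc, mul_nonsing_inv _ hR,
      Matrix.mul_one, ← mulVec_mulVec, hVperpv, mulVec_zero]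
  have hAw : Aᴴ *ᵥ w = 0 := by rw [mulVec_smul, hAx, smul_zero]
  have hw : star w ⬝ᵥ w = 1 := star_inv_sqrt_smul_dotProduct_self hγpos <| by
    rw [hγ, star_dotProduct_inv_mul_conjTranspose_mulVec]
  have hVV : Vᴴ * V = 1 := hV ▸ conjTranspose_mul_self_fromCols_replicateCol hA hAw hw
  have hpos : (R * (V * D * Vᴴ) * Rᴴ).PosDef := by
    have hD : D.PosDef := posDef_diagonal_iff.mpr fun | .inl i => hd i | .inr _ => he
    have hRV : IsUnit (R * V) := ((isUnit_iff_isUnit_det R).mpr hR).mul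
      ((isUnit_iff_isUnit_det V).mpr (isUnit_det_of_left_inverse hVV))
    simpa [star_eq_conjTranspose, conjTranspose_mul, Matrix.mul_assoc] using
      (IsUnit.posDef_star_right_conjugate_iff hRV).mpr hD
  have hWx : (V * D * Vᴴ) *ᵥ x = e • x := by
    have hx : x = ((√γ : ℝ) : ℂ) • w := by
      rw [smul_smul, mul_inv_cancel₀ (by simpa using (Real.sqrt_pos.mpr hγpos).ne'), one_smul]
    rw [hx, mulVec_smul, hV, fromCols_replicateCol_mul_diagonal_mul_conjTranspose_mulVec hAw hw,
      smul_comm]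
  refine ⟨hVV, hpos, inv_mulVec_eq_smul_of_mulVec_eq_smul ?_ he.ne' ?_⟩
  · exact (isUnit_iff_isUnit_det _).mp hpos.isUnit
  · exact mul_mul_conjTranspose_mulVec_inv_mul_conjTranspose_mulVec hR hWx

end Whitening

section SqrtDiagonal

variable {ι : Type*} [Fintype ι] [DecidableEq ι] (U : Matrix ι ι ℂ) (Λ : ι → ℝ)

theorem conjTranspose_mul_sqrt_diagonal :
    (U * diagonal fun i => ((√(Λ i) : ℝ) : ℂ))ᴴ =
      (diagonal fun i => ((√(Λ i) : ℝ) : ℂ)) * Uᴴ := by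
  rw [conjTranspose_mul, diagonal_conjTranspose]
  congr 2
  ext i
  simp

variable {U Λ}

theorem mul_diagonal_mul_conjTranspose_eq_sqrt (hΛ : ∀ i, 0 ≤ Λ i) :
    U * diagonal (fun i => (Λ i : ℂ)) * Uᴴ =
      (U * diagonal fun i => ((√(Λ i) : ℝ) : ℂ)) *
        (U * diagonal fun i => ((√(Λ i) : ℝ) : ℂ))ᴴ := by
  simp only [conjTranspose_mul_sqrt_diagonal, Matrix.mul_assoc]
  rw [← Matrix.mul_assoc (diagonal _) (diagonal _), diagonal_mul_diagonal]
  simp_rw [← Complex.ofReal_mul, Real.mul_self_sqrt (hΛ _)]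

theorem mul_sqrt_diagonal_mul_inv_sqrt_diagonal_mul_conjTranspose (hU : U * Uᴴ = 1)
    (hΛ : ∀ i, 0 < Λ i) :
    (U * diagonal fun i => ((√(Λ i) : ℝ) : ℂ)) *
      ((diagonal fun i => (((√(Λ i))⁻¹ : ℝ) : ℂ)) * Uᴴ) = 1 := by
  rw [Matrix.mul_assoc, ← Matrix.mul_assoc (diagonal _), diagonal_mul_diagonal]
  simp_rw [← Complex.ofReal_mul, mul_inv_cancel₀ (Real.sqrt_pos.mpr (hΛ _)).ne',
    Complex.ofReal_one, diagonal_one, Matrix.one_mul, hU]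

end SqrtDiagonal

end Matrix

theorem stmt_12_general {n : ℕ}
    (U : Matrix (Fin n ⊕ Fin 1) (Fin n ⊕ Fin 1) ℂ) (hU : Uᴴ * U = 1)
    (Λ : (Fin n ⊕ Fin 1) → ℝ) (hΛ : ∀ i, 0 < Λ i)
    (Sig : Matrix (Fin n ⊕ Fin 1) (Fin n ⊕ Fin 1) ℂ)
    (hSig : Sig = U * diagonal (fun i => (Λ i : ℂ)) * Uᴴ)
    (v : (Fin n ⊕ Fin 1) → ℂ)
    (Vperp : Matrix (Fin n ⊕ Fin 1) (Fin n) ℂ)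
    (hVperpv : Vperpᴴ *ᵥ v = 0)
    (F : Matrix (Fin n) (Fin n) ℂ) (hF : IsUnit F.det)
    (hFF : F * Fᴴ = Vperpᴴ * Sig * Vperp)
    (γ : ℝ) (hγpos : 0 < γ) (hγ : (γ : ℂ) = star v ⬝ᵥ (Sig⁻¹ *ᵥ v))
    (V : Matrix (Fin n ⊕ Fin 1) (Fin n ⊕ Fin 1) ℂ)
    (hV : V = fromCols
        (diagonal (fun i => ((Real.sqrt (Λ i) : ℝ) : ℂ)) * Uᴴ * Vperp * (F⁻¹)ᴴ)
        (replicateCol (Fin 1) (((Real.sqrt γ : ℝ) : ℂ)⁻¹ •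
          (diagonal (fun i => (((Real.sqrt (Λ i))⁻¹ : ℝ) : ℂ)) *ᵥ (Uᴴ *ᵥ v)))))
    (ℓ₁ : Fin n → ℝ) (hℓ₁ : ∀ i, 0 < ℓ₁ i) (ℓ₂ : ℝ) (hℓ₂ : 0 < ℓ₂)
    (D : Matrix (Fin n ⊕ Fin 1) (Fin n ⊕ Fin 1) ℂ)
    (hD : D = diagonal (Sum.elim (fun i => (((ℓ₁ i)⁻¹ : ℝ) : ℂ))
        (fun _ => ((ℓ₂⁻¹ : ℝ) : ℂ))))
    (Wt : Matrix (Fin n ⊕ Fin 1) (Fin n ⊕ Fin 1) ℂ) (hWt : Wt = V * D * Vᴴ)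
    (Sigt : Matrix (Fin n ⊕ Fin 1) (Fin n ⊕ Fin 1) ℂ)
    (hSigt : Sigt = U * diagonal (fun i => ((Real.sqrt (Λ i) : ℝ) : ℂ)) * Wt *
        diagonal (fun i => ((Real.sqrt (Λ i) : ℝ) : ℂ)) * Uᴴ) :
    Vᴴ * V = 1 ∧ Sigt.PosDef ∧ Sigt⁻¹ *ᵥ v = ((ℓ₂ : ℝ) : ℂ) • (Sig⁻¹ *ᵥ v) := by
  have hR := mul_sqrt_diagonal_mul_inv_sqrt_diagonal_mul_conjTranspose (mul_eq_one_comm.mp hU) hΛ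
  rw [hSig, mul_diagonal_mul_conjTranspose_eq_sqrt fun i => (hΛ i).le] at hFF hγ ⊢
  rw [mulVec_mulVec, ← inv_eq_right_inv hR, ← conjTranspose_mul_sqrt_diagonal] at hV
  set R := U * diagonal fun i => ((√(Λ i) : ℝ) : ℂ)
  have hSigt' : Sigt = R * (V * D * Vᴴ) * Rᴴ := by
    rw [hSigt, hWt]
    simp only [R, conjTranspose_mul_sqrt_diagonal, Matrix.mul_assoc]
  obtain ⟨hVV, hpos, hger⟩ := whitenedFrame_spec (isUnit_det_of_right_inverse hR) hVperpv hF hFF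
    hγpos hγ hV _ (fun i => Complex.zero_lt_real.mpr (inv_pos.mpr (hℓ₁ i))) _
    (Complex.zero_lt_real.mpr (inv_pos.mpr hℓ₂))
  refine ⟨hVV, hSigt' ▸ hD ▸ hpos, ?_⟩
  rw [hSigt', hD, hger, Complex.ofReal_inv, inv_inv]

/-- construction of Σ_t satisfying the GER in the eigenvalue-mismatch
case: V is unitary, Σ_t = UΛ^{1/2}(VDVᴴ)Λ^{1/2}Uᴴ is Hermitian positive definite and
Σ_t⁻¹v = ℓ₂Σ⁻¹v. -/
theorem stmt_12 {n : ℕ} (hn : 1 ≤ n)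
    (U : Matrix (Fin n ⊕ Fin 1) (Fin n ⊕ Fin 1) ℂ) (hU : Uᴴ * U = 1)
    (Λ : (Fin n ⊕ Fin 1) → ℝ) (hΛ : ∀ i, 0 < Λ i)
    (Sig : Matrix (Fin n ⊕ Fin 1) (Fin n ⊕ Fin 1) ℂ)
    (hSig : Sig = U * diagonal (fun i => (Λ i : ℂ)) * Uᴴ)
    (v : (Fin n ⊕ Fin 1) → ℂ) (hv : star v ⬝ᵥ v = 1)
    (Vperp : Matrix (Fin n ⊕ Fin 1) (Fin n) ℂ)
    (hVperp : Vperpᴴ * Vperp = 1) (hVperpv : Vperpᴴ *ᵥ v = 0)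
    (F : Matrix (Fin n) (Fin n) ℂ) (hF : IsUnit F.det)
    (hFF : F * Fᴴ = Vperpᴴ * Sig * Vperp)
    (γ : ℝ) (hγpos : 0 < γ) (hγ : (γ : ℂ) = star v ⬝ᵥ (Sig⁻¹ *ᵥ v))
    (V : Matrix (Fin n ⊕ Fin 1) (Fin n ⊕ Fin 1) ℂ)
    (hV : V = fromCols
        (diagonal (fun i => ((Real.sqrt (Λ i) : ℝ) : ℂ)) * Uᴴ * Vperp * (F⁻¹)ᴴ)
        (replicateCol (Fin 1) (((Real.sqrt γ : ℝ) : ℂ)⁻¹ •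
          (diagonal (fun i => (((Real.sqrt (Λ i))⁻¹ : ℝ) : ℂ)) *ᵥ (Uᴴ *ᵥ v)))))
    (ℓ₁ : Fin n → ℝ) (hℓ₁ : ∀ i, 0 < ℓ₁ i) (ℓ₂ : ℝ) (hℓ₂ : 0 < ℓ₂)
    (D : Matrix (Fin n ⊕ Fin 1) (Fin n ⊕ Fin 1) ℂ)
    (hD : D = diagonal (Sum.elim (fun i => (((ℓ₁ i)⁻¹ : ℝ) : ℂ))
        (fun _ => ((ℓ₂⁻¹ : ℝ) : ℂ))))
    (Wt : Matrix (Fin n ⊕ Fin 1) (Fin n ⊕ Fin 1) ℂ) (hWt : Wt = V * D * Vᴴ)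
    (Sigt : Matrix (Fin n ⊕ Fin 1) (Fin n ⊕ Fin 1) ℂ)
    (hSigt : Sigt = U * diagonal (fun i => ((Real.sqrt (Λ i) : ℝ) : ℂ)) * Wt *
        diagonal (fun i => ((Real.sqrt (Λ i) : ℝ) : ℂ)) * Uᴴ) :
    Vᴴ * V = 1 ∧ Sigt.PosDef ∧ Sigt⁻¹ *ᵥ v = ((ℓ₂ : ℝ) : ℂ) • (Sig⁻¹ *ᵥ v) :=
  stmt_12_general U hU Λ hΛ Sig hSig v Vperp hVperpv F hF hFF γ hγpos hγ V hV ℓ₁ hℓ₁ ℓ₂ hℓ₂ D hD Wt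
    hWt Sigt hSigt
end

section
/- Let N ≥ 2, let W be a Hermitian positive definite N×N complex matrix partitioned in block form W = [[W₁₁, W₁₂],[W₂₁, W₂₂]] with W₁₁ of size (N−1)×(N−1), let x ∈ ℂᴺ be partitioned as x = (x₁, x₂) with x₁ ∈ ℂᴺ⁻¹, x₂ ∈ ℂ, let e_N be the last standard basis vector of ℂᴺ, and let κ > 0 be a real number. Define s₁ := xᴴ W⁻¹ x, s₂ := |xᴴ W⁻¹ e_N|² / (e_Nᴴ W⁻¹ e_N) and W₂.₁ := W₂₂ − W₂₁ W₁₁⁻¹ W₁₂. Then s₂ / (κ + s₁ − s₂) = |x₂ − W₂₁ W₁₁⁻¹ x₁|² / (W₂.₁ · (κ + x₁ᴴ W₁₁⁻¹ x₁)). -/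
/-!
Block Gaussian elimination with pivot `W₁₁` and Schur complement `σ = W₂.₁` gives, for all
`x, y`, `xᴴ W⁻¹ y = x₁ᴴ W₁₁⁻¹ y₁ + conj (u x) σ⁻¹ u y` with `u x = x₂ - W₂₁ W₁₁⁻¹ x₁`.
As `u e_N = 1` and `σ` is real, `s₁ = x₁ᴴ W₁₁⁻¹ x₁ + |u x|² / σ` and `s₂ = |u x|² / σ`,
so `κ + s₁ - s₂ = κ + x₁ᴴ W₁₁⁻¹ x₁`.
-/

open Matrix
open scoped ComplexOrder

namespace Matrix

variable {m n α : Type*} [Fintype m] [Fintype n] [DecidableEq m] [DecidableEq n]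

section CommRing

variable [CommRing α] {A : Matrix m m α} {B : Matrix m n α} {C : Matrix n m α} {D : Matrix n n α}

theorem isUnit_schur_of_isUnit_fromBlocks (hA : IsUnit A) (hM : IsUnit (fromBlocks A B C D)) :
    IsUnit (D - C * A⁻¹ * B) := by
  have := hA.invertible
  rwa [isUnit_fromBlocks_iff_of_invertible₁₁, invOf_eq_nonsing_inv] at hM

theorem inv_fromBlocks_mulVec (hA : IsUnit A) (hS : IsUnit (D - C * A⁻¹ * B))
    (y₁ : m → α) (y₂ : n → α) :
    (fromBlocks A B C D)⁻¹ *ᵥ (y₁ ⊕ᵥ y₂) =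
      (A⁻¹ *ᵥ (y₁ - B *ᵥ ((D - C * A⁻¹ * B)⁻¹ *ᵥ (y₂ - (C * A⁻¹) *ᵥ y₁)))) ⊕ᵥ
        (D - C * A⁻¹ * B)⁻¹ *ᵥ (y₂ - (C * A⁻¹) *ᵥ y₁) := by
  set z := (D - C * A⁻¹ * B)⁻¹ *ᵥ (y₂ - (C * A⁻¹) *ᵥ y₁)
  have := hA.invertible
  have hS' : IsUnit (D - C * ⅟A * B) := by rwa [invOf_eq_nonsing_inv]
  have := hS'.invertible
  have := fromBlocks₁₁Invertible A B C D
  refine inv_mulVec_eq_vec ?_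
  have hz : (D - C * A⁻¹ * B) *ᵥ z = y₂ - (C * A⁻¹) *ᵥ y₁ := by
    rw [mulVec_mulVec, mul_nonsing_inv _ ((isUnit_iff_isUnit_det _).1 hS), one_mulVec]
  clear_value z
  rw [fromBlocks_mulVec]
  simp only [Sum.elim_comp_inl, Sum.elim_comp_inr, mulVec_mulVec, mul_inv_of_invertible,
    one_mulVec, sub_add_cancel]
  congr 1
  rw [← add_sub_cancel ((C * A⁻¹) *ᵥ y₁) y₂, ← hz, sub_mulVec, mulVec_sub, mulVec_mulVec]
  abel

theorem star_dotProduct_inv_fromBlocks_mulVec [StarRing α] {B : Matrix m n α}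
    (hA : IsUnit A) (hAh : A.IsHermitian) (hS : IsUnit (D - Bᴴ * A⁻¹ * B))
    (x₁ y₁ : m → α) (x₂ y₂ : n → α) :
    star (x₁ ⊕ᵥ x₂) ⬝ᵥ ((fromBlocks A B Bᴴ D)⁻¹ *ᵥ (y₁ ⊕ᵥ y₂)) =
      star x₁ ⬝ᵥ (A⁻¹ *ᵥ y₁) + star (x₂ - (Bᴴ * A⁻¹) *ᵥ x₁) ⬝ᵥ
        ((D - Bᴴ * A⁻¹ * B)⁻¹ *ᵥ (y₂ - (Bᴴ * A⁻¹) *ᵥ y₁)) := by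
  set z := (D - Bᴴ * A⁻¹ * B)⁻¹ *ᵥ (y₂ - (Bᴴ * A⁻¹) *ᵥ y₁)
  have hadj : star x₁ ⬝ᵥ (A⁻¹ *ᵥ B *ᵥ z) = star ((Bᴴ * A⁻¹) *ᵥ x₁) ⬝ᵥ z := by
    rw [star_mulVec, conjTranspose_mul, hAh.inv.eq, conjTranspose_conjTranspose, mulVec_mulVec,
      dotProduct_mulVec]
  rw [inv_fromBlocks_mulVec hA hS, Function.star_sumElim, sumElim_dotProduct_sumElim, mulVec_sub,
    dotProduct_sub, hadj, star_sub, sub_dotProduct]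
  abel

end CommRing

section Field

variable {K : Type*} [Field K]

theorem dotProduct_inv_mulVec_fin_one (S : Matrix (Fin 1) (Fin 1) K) (a b : Fin 1 → K) :
    a ⬝ᵥ (S⁻¹ *ᵥ b) = a 0 * (S 0 0)⁻¹ * b 0 := by
  simp [dotProduct, mulVec, Ring.inverse_eq_inv', mul_assoc]

theorem star_dotProduct_inv_fromBlocks_mulVec_fin_one [StarRing K] {A : Matrix m m K}
    {b : Matrix m (Fin 1) K} {d : Matrix (Fin 1) (Fin 1) K}
    (hA : IsUnit A) (hAh : A.IsHermitian) (hS : IsUnit (d - bᴴ * A⁻¹ * b))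
    (x₁ y₁ : m → K) (x₂ y₂ : K) :
    star (x₁ ⊕ᵥ fun _ => x₂) ⬝ᵥ ((fromBlocks A b bᴴ d)⁻¹ *ᵥ (y₁ ⊕ᵥ fun _ => y₂)) =
      star x₁ ⬝ᵥ (A⁻¹ *ᵥ y₁) + star (x₂ - ((bᴴ * A⁻¹) *ᵥ x₁) 0) *
        ((d - bᴴ * A⁻¹ * b) 0 0)⁻¹ * (y₂ - ((bᴴ * A⁻¹) *ᵥ y₁) 0) := by
  rw [star_dotProduct_inv_fromBlocks_mulVec hA hAh hS, dotProduct_inv_mulVec_fin_one]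
  rfl

end Field

end Matrix

namespace Complex

theorem ofReal_norm_sq_eq_mul_star (z : ℂ) : ((‖z‖ ^ 2 : ℝ) : ℂ) = z * star z := by
  push_cast
  exact (mul_conj' z).symm

theorem ofReal_norm_mul_inv_sq_div_inv {σ : ℂ} (hσ : star σ = σ) (u : ℂ) :
    ((‖u * σ⁻¹‖ ^ 2 : ℝ) : ℂ) / σ⁻¹ = u * σ⁻¹ * star u := by
  rcases eq_or_ne σ 0 with rfl | hσ₀
  · simp
  rw [ofReal_norm_sq_eq_mul_star, star_mul', star_inv₀, hσ]
  field_simp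

end Complex

theorem stmt_15_general {n : ℕ}
    (W₁₁ : Matrix (Fin n) (Fin n) ℂ) (W₁₂ : Matrix (Fin n) (Fin 1) ℂ)
    (W₂₁ : Matrix (Fin 1) (Fin n) ℂ) (W₂₂ : Matrix (Fin 1) (Fin 1) ℂ)
    (hW : (fromBlocks W₁₁ W₁₂ W₂₁ W₂₂).PosDef)
    (x₁ : Fin n → ℂ) (x₂ : ℂ) (κ : ℝ)
    (s₁ s₂ : ℂ)
    (hs₁ : s₁ = star (Sum.elim x₁ fun _ => x₂) ⬝ᵥ
        ((fromBlocks W₁₁ W₁₂ W₂₁ W₂₂)⁻¹ *ᵥ Sum.elim x₁ fun _ => x₂))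
    (hs₂ : s₂ = ((‖star (Sum.elim x₁ fun _ => x₂) ⬝ᵥ
          ((fromBlocks W₁₁ W₁₂ W₂₁ W₂₂)⁻¹ *ᵥ
            Sum.elim (0 : Fin n → ℂ) (1 : Fin 1 → ℂ))‖ ^ 2 : ℝ) : ℂ) /
        (star (Sum.elim (0 : Fin n → ℂ) (1 : Fin 1 → ℂ)) ⬝ᵥ
          ((fromBlocks W₁₁ W₁₂ W₂₁ W₂₂)⁻¹ *ᵥ
            Sum.elim (0 : Fin n → ℂ) (1 : Fin 1 → ℂ)))) :
    s₂ / ((κ : ℂ) + s₁ - s₂) =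
      ((‖x₂ - ((W₂₁ * W₁₁⁻¹) *ᵥ x₁) 0‖ ^ 2 : ℝ) : ℂ) /
        ((W₂₂ - W₂₁ * W₁₁⁻¹ * W₁₂) 0 0 *
          ((κ : ℂ) + star x₁ ⬝ᵥ (W₁₁⁻¹ *ᵥ x₁))) := by
  obtain ⟨hAh, rfl, -, -⟩ := isHermitian_fromBlocks_iff.1 hW.isHermitian
  have hA : W₁₁.PosDef := hW.submatrix Sum.inl_injective
  have hS := isUnit_schur_of_isUnit_fromBlocks hA.isUnit hW.isUnit
  have hσ : star ((W₂₂ - W₁₂ᴴ * W₁₁⁻¹ * W₁₂) 0 0) = (W₂₂ - W₁₂ᴴ * W₁₁⁻¹ * W₁₂) 0 0 :=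
    congrFun₂ (((hAh.fromBlocks₁₁ _ _).1 hW.isHermitian).eq) 0 0
  rw [hs₁, hs₂, Pi.one_def]
  simp only [star_dotProduct_inv_fromBlocks_mulVec_fin_one hA.isUnit hAh hS]
  generalize (W₂₂ - W₁₂ᴴ * W₁₁⁻¹ * W₁₂) 0 0 = σ at hσ ⊢
  generalize x₂ - ((W₁₂ᴴ * W₁₁⁻¹) *ᵥ x₁) 0 = u
  generalize star x₁ ⬝ᵥ (W₁₁⁻¹ *ᵥ x₁) = q
  simp only [mulVec_zero, dotProduct_zero, Pi.zero_apply, sub_zero, star_zero, star_one, zero_add,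
    mul_one, one_mul]
  rw [Complex.ofReal_norm_mul_inv_sq_div_inv hσ, star_star, ← add_assoc,
    add_sub_cancel_right, Complex.ofReal_norm_sq_eq_mul_star, ← div_div]
  ring

/-- Kalson's statistic s₂/(κ + s₁ − s₂) expressed through the blocks of W. -/
theorem stmt_15 {n : ℕ} (hn : 1 ≤ n)
    (W₁₁ : Matrix (Fin n) (Fin n) ℂ) (W₁₂ : Matrix (Fin n) (Fin 1) ℂ)
    (W₂₁ : Matrix (Fin 1) (Fin n) ℂ) (W₂₂ : Matrix (Fin 1) (Fin 1) ℂ)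
    (hW : (fromBlocks W₁₁ W₁₂ W₂₁ W₂₂).PosDef)
    (x₁ : Fin n → ℂ) (x₂ : ℂ) (κ : ℝ) (hκ : 0 < κ)
    (s₁ s₂ : ℂ)
    (hs₁ : s₁ = star (Sum.elim x₁ fun _ => x₂) ⬝ᵥ
        ((fromBlocks W₁₁ W₁₂ W₂₁ W₂₂)⁻¹ *ᵥ Sum.elim x₁ fun _ => x₂))
    (hs₂ : s₂ = ((‖star (Sum.elim x₁ fun _ => x₂) ⬝ᵥ
          ((fromBlocks W₁₁ W₁₂ W₂₁ W₂₂)⁻¹ *ᵥ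
            Sum.elim (0 : Fin n → ℂ) (1 : Fin 1 → ℂ))‖ ^ 2 : ℝ) : ℂ) /
        (star (Sum.elim (0 : Fin n → ℂ) (1 : Fin 1 → ℂ)) ⬝ᵥ
          ((fromBlocks W₁₁ W₁₂ W₂₁ W₂₂)⁻¹ *ᵥ
            Sum.elim (0 : Fin n → ℂ) (1 : Fin 1 → ℂ)))) :
    s₂ / ((κ : ℂ) + s₁ - s₂) =
      ((‖x₂ - ((W₂₁ * W₁₁⁻¹) *ᵥ x₁) 0‖ ^ 2 : ℝ) : ℂ) /
        ((W₂₂ - W₂₁ * W₁₁⁻¹ * W₁₂) 0 0 *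
          ((κ : ℂ) + star x₁ ⬝ᵥ (W₁₁⁻¹ *ᵥ x₁))) :=
  stmt_15_general W₁₁ W₁₂ W₂₁ W₂₂ hW x₁ x₂ κ s₁ s₂ hs₁ hs₂
end
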